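/- arXiv:2505.08937 — 10 statements merged into one kernel-verified Lean document; each statement's English description precedes it below -/
import Mathlib

section
/- For all block indices j ≤ l < n_t and all excitation indices ε, ε' ∈ E, the mass matrix satisfies M_{(j,ε),(l,ε')} = (D_{l-j})_{ε,ε'}; in particular, the mass matrix is symmetric and block Toeplitz, with blocks given by the data matrices. -/
open Matrix
open scoped RealInnerProductSpace

private lemma iter_inner {H : Type*} [NormedAddCommGroup H] [InnerProductSpace ℝ H]
    (P : H ≃ₗᵢ[ℝ] H) (x y : H) (j k : ℕ) :
    ⟪(⇑P)^[j] x, (⇑P)^[j + k] y⟫ = ⟪x, (⇑P)^[k] y⟫ := by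
  induction j with
  | zero => simp
  | succ n ih =>
    have : n + 1 + k = (n + k) + 1 := by ring
    rw [this, Function.iterate_succ_apply', Function.iterate_succ_apply',
      P.inner_map_map, ih]

/-- For all block indices `j ≤ l < n_t` and all excitation indices `ε, ε' ∈ E`,
the mass matrix satisfies `M_{(j,ε),(l,ε')} = (D_{l-j})_{ε,ε'}`; in particular, the mass
matrix is symmetric and block Toeplitz, with blocks given by the data matrices. -/
theorem mass_matrix_data_driven
    {H : Type*} [NormedAddCommGroup H] [InnerProductSpace ℝ H]
    {E : Type*} [Fintype E] [Nonempty E]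
    (P : H ≃ₗᵢ[ℝ] H) (φ₀ : E → H) (n_t : ℕ) (hn : 1 ≤ n_t)
    (φ : ℕ → E → H) (hφ : ∀ j ε, φ j ε = (⇑P)^[j] (φ₀ ε))
    (D : ℕ → Matrix E E ℝ) (hD : ∀ j ε' ε, D j ε' ε = ⟪φ₀ ε', φ j ε⟫)
    (M : Matrix (Fin n_t × E) (Fin n_t × E) ℝ)
    (hM : ∀ (j l : Fin n_t) (ε ε' : E),
      M (j, ε) (l, ε') = ⟪φ (j : ℕ) ε, φ (l : ℕ) ε'⟫) :
    (∀ (j l : Fin n_t), (j : ℕ) ≤ (l : ℕ) → ∀ (ε ε' : E),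
      M (j, ε) (l, ε') = D ((l : ℕ) - (j : ℕ)) ε ε') ∧ Mᵀ = M := by
  constructor
  · intro j l hjl ε ε'
    rw [hM, hD, hφ, hφ, hφ]
    have h := iter_inner P (φ₀ ε) (φ₀ ε') (j : ℕ) ((l : ℕ) - (j : ℕ))
    rwa [show (j : ℕ) + ((l : ℕ) - (j : ℕ)) = (l : ℕ) from by omega] at h
  · ext ⟨j, ε⟩ ⟨l, ε'⟩
    rw [Matrix.transpose_apply, hM, hM, real_inner_comm]
end

section
/- Assume the family of snapshots {φ_j ε : j < n_t, ε ∈ E} is linearly independent. Then the ROM propagator is an unreduced block upper Hessenberg matrix: (a) (P^ROM)_{(j,ε),(l,ε')} = 0 whenever j > l + 1; and (b) for every l ≤ n_t − 2, the subdiagonal E×E block ((P^ROM)_{(l+1,α),(l,ε')})_{α,ε'} is an invertible matrix, satisfying (P^ROM)_{l+1,l} · R_{l,l} = R_{l+1,l+1}, where R_{j,j} denotes the (invertible) diagonal E×E block (R_{(j,α),(j,ε')})_{α,ε'}. -/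
open Matrix
open scoped RealInnerProductSpace

/-!
Let `K_j = blockSpan φ j`, the span of the snapshot blocks `0, …, j`; by causality it is also the
span of the blocks `v_0, …, v_j`, so `v_k ⟂ K_j` for `k > j`. Since `P φ_k = φ_{k+1}`, `P` maps
`K_l` into `K_{l+1}`, and `P v_l ∈ K_{l+1} ⟂ v_j` for `j > l + 1`: this is the Hessenberg
structure. The same orthogonality makes `R` block upper triangular, and `R` is invertible since it
expresses the linearly independent snapshots in the orthonormal family `v`; hence its diagonal
blocks are invertible. Finally, expanding `φ_l` in the family `v` turns
`R_{l+1,l+1} = ⟪v_{l+1}, P φ_l⟫` into `(P^ROM R)_{l+1,l}`, which the block structures of both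
factors reduce to `P^ROM_{l+1,l} R_{l,l}`.
-/

open Submodule

theorem Orthonormal.sum_inner_smul_eq_of_mem_span {𝕜 F ι : Type*} [RCLike 𝕜]
    [NormedAddCommGroup F] [InnerProductSpace 𝕜 F] [Fintype ι] {w : ι → F}
    (hw : Orthonormal 𝕜 w) {x : F} (hx : x ∈ span 𝕜 (Set.range w)) :
    ∑ i, inner 𝕜 (w i) x • w i = x := by
  obtain ⟨c, rfl⟩ := (mem_span_range_iff_exists_fun 𝕜).mp hx
  simp only [hw.inner_right_fintype]

theorem Orthonormal.inner_map_eq_sum_of_mem_span {F ι G : Type*} [NormedAddCommGroup F]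
    [InnerProductSpace ℝ F] [Fintype ι] [FunLike G F F] [LinearMapClass G ℝ F F] {w : ι → F}
    (hw : Orthonormal ℝ w) (T : G) (u : F) {x : F} (hx : x ∈ span ℝ (Set.range w)) :
    ⟪u, T x⟫ = ∑ i, ⟪u, T (w i)⟫ * ⟪w i, x⟫ := by
  conv_lhs => rw [← hw.sum_inner_smul_eq_of_mem_span hx]
  simp only [map_sum, map_smul, inner_sum, real_inner_smul_right, mul_comm]

theorem Orthonormal.isUnit_of_linearIndependent_of_mem_span {F ι : Type*}
    [NormedAddCommGroup F] [InnerProductSpace ℝ F] [Fintype ι] [DecidableEq ι] {w f : ι → F}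
    (hw : Orthonormal ℝ w) (hf : LinearIndependent ℝ f) (hfw : ∀ i, f i ∈ span ℝ (Set.range w)) :
    IsUnit (of fun i j => ⟪w i, f j⟫) := by
  rw [← linearIndependent_cols_iff_isUnit, Fintype.linearIndependent_iff]
  intro c hc
  have hsum : ∑ j, c j • f j = 0 := by
    rw [← hw.sum_inner_smul_eq_of_mem_span (sum_mem fun j _ => smul_mem _ _ (hfw j))]
    refine Finset.sum_eq_zero fun i _ => ?_
    have hi : ⟪w i, ∑ j, c j • f j⟫ = 0 := by
      simpa [inner_sum, real_inner_smul_right, mul_comm] using congrFun hc i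
    rw [hi, zero_smul]
  exact Fintype.linearIndependent_iff.mp hf c hsum

section BlockSpan

variable {H E : Type*} [NormedAddCommGroup H] [InnerProductSpace ℝ H] {n : ℕ}

def blockSpan (f : Fin n → E → H) (j : Fin n) : Submodule ℝ H :=
  span ℝ {x | ∃ (k : Fin n) (α : E), k ≤ j ∧ x = f k α}

theorem mem_blockSpan (f : Fin n → E → H) {k j : Fin n} (hkj : k ≤ j) (α : E) :
    f k α ∈ blockSpan f j :=
  subset_span ⟨k, α, hkj, rfl⟩

theorem blockSpan_le_span_range (f : Fin n → E → H) (j : Fin n) :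
    blockSpan f j ≤ span ℝ (Set.range fun p : Fin n × E => f p.1 p.2) :=
  span_mono <| by rintro _ ⟨k, α, -, rfl⟩; exact ⟨(k, α), rfl⟩

theorem inner_eq_zero_of_mem_blockSpan {v : Fin n → E → H}
    (hv : Orthonormal ℝ fun p : Fin n × E => v p.1 p.2) {j k : Fin n} (hjk : j < k) (α : E)
    {x : H} (hx : x ∈ blockSpan v j) : ⟪v k α, x⟫ = 0 := by
  suffices blockSpan v j ≤ LinearMap.ker (innerₛₗ ℝ (v k α)) from this hx
  refine span_le.2 ?_
  rintro _ ⟨k', β, hk', rfl⟩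
  exact hv.inner_eq_zero (i := (k, α)) (j := (k', β)) fun h =>
    (hk'.trans_lt hjk).ne' (congrArg Prod.fst h)

theorem map_mem_blockSpan_of_lt {G : Type*} [FunLike G H H] [LinearMapClass G ℝ H H] {T : G}
    {φ : ℕ → E → H} (hT : ∀ j α, T (φ j α) = φ (j + 1) α) {l l' : Fin n} (hll' : l < l')
    {x : H} (hx : x ∈ blockSpan (fun k α => φ k α) l) :
    T x ∈ blockSpan (fun k α => φ k α) l' := by
  suffices (blockSpan (fun k α => φ k α) l).map (T : H →ₗ[ℝ] H) ≤
      blockSpan (fun k α => φ k α) l' from this (mem_map_of_mem hx)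
  rw [blockSpan, map_span_le]
  rintro _ ⟨k, α, hkl, rfl⟩
  rw [LinearMap.coe_coe, hT]
  exact mem_blockSpan (fun (k : Fin n) α => φ k α) (k := ⟨k + 1, by omega⟩) (by grind) α

theorem inner_eq_zero_of_lt_of_blockSpan_eq {v : Fin n → E → H} {φ : ℕ → E → H}
    (hv : Orthonormal ℝ fun p : Fin n × E => v p.1 p.2)
    (hK : ∀ j, blockSpan v j = blockSpan (fun k α => φ k α) j) {l k : Fin n} (hlk : l < k)
    (α β : E) : ⟪v k α, φ l β⟫ = 0 :=
  inner_eq_zero_of_mem_blockSpan hv hlk α <|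
    (hK l).symm ▸ mem_blockSpan (fun (k : Fin n) α => φ k α) le_rfl β

theorem inner_map_eq_zero_of_succ_lt_of_blockSpan_eq {G : Type*} [FunLike G H H]
    [LinearMapClass G ℝ H H] {T : G} {v : Fin n → E → H} {φ : ℕ → E → H}
    (hv : Orthonormal ℝ fun p : Fin n × E => v p.1 p.2)
    (hK : ∀ j, blockSpan v j = blockSpan (fun k α => φ k α) j)
    (hT : ∀ j α, T (φ j α) = φ (j + 1) α) {j l : Fin n} (hlj : (l : ℕ) + 1 < j) (α β : E) :
    ⟪v j α, T (v l β)⟫ = 0 := by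
  let l' : Fin n := ⟨l + 1, by omega⟩
  refine inner_eq_zero_of_mem_blockSpan hv (j := l') (Fin.lt_def.2 hlj) α ?_
  rw [hK]
  refine map_mem_blockSpan_of_lt hT (Fin.lt_def.2 (Nat.lt_succ_self l)) ?_
  rw [← hK]
  exact mem_blockSpan v le_rfl β

end BlockSpan

theorem Matrix.BlockTriangular.isUnit_toSquareBlock {m α R : Type*} [Fintype m] [DecidableEq m]
    [CommRing R] [LinearOrder α] {M : Matrix m m R} {b : m → α} (hM : M.BlockTriangular b)
    (hU : IsUnit M) (k : α) : IsUnit (M.toSquareBlock b k) := by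
  rw [isUnit_iff_isUnit_det] at hU ⊢
  by_cases hk : k ∈ Finset.univ.image b
  · exact isUnit_of_dvd_unit (hM.det ▸ Finset.dvd_prod_of_mem _ hk) hU
  · have : IsEmpty { a // b a = k } :=
      ⟨fun i => hk (Finset.mem_image.2 ⟨i, Finset.mem_univ _, i.2⟩)⟩
    simp

theorem Matrix.BlockTriangular.isUnit_diagonalBlock {α E R : Type*} [Fintype α] [LinearOrder α]
    [Fintype E] [DecidableEq E] [CommRing R] {M : Matrix (α × E) (α × E) R}
    (hM : M.BlockTriangular Prod.fst) (hU : IsUnit M) (k : α) :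
    IsUnit (of fun i j : E => M (k, i) (k, j)) := by
  let e : E ≃ { p : α × E // p.1 = k } :=
    { toFun i := ⟨(k, i), rfl⟩
      invFun p := p.1.2
      left_inv _ := rfl
      right_inv := by rintro ⟨⟨_, i⟩, rfl⟩; rfl }
  rw [show (of fun i j : E => M (k, i) (k, j)) = (M.toSquareBlock Prod.fst k).submatrix e e
    from rfl, isUnit_submatrix_equiv]
  exact hM.isUnit_toSquareBlock hU k

theorem Matrix.blockHessenberg_mul_blockTriangular_apply_subdiagonal {E R : Type*} [Fintype E]
    [NonUnitalNonAssocSemiring R] {n : ℕ} {A B : Matrix (Fin n × E) (Fin n × E) R}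
    (hA : ∀ i j : Fin n × E, (j.1 : ℕ) + 1 < i.1 → A i j = 0) (hB : B.BlockTriangular Prod.fst)
    {l l' : Fin n} (hl' : (l' : ℕ) = l + 1) (α ε : E) :
    (A * B) (l', α) (l, ε) = ∑ β, A (l', α) (l, β) * B (l, β) (l, ε) := by
  rw [mul_apply, Fintype.sum_prod_type, Finset.sum_eq_single l]
  · intro k _ hkl
    refine Finset.sum_eq_zero fun β _ => ?_
    rcases lt_or_gt_of_ne hkl with hk | hk
    · rw [hA _ _ (by dsimp only; rw [Fin.lt_def] at hk; omega), zero_mul]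
    · rw [hB hk, mul_zero]
  · simp

theorem rom_propagator_block_hessenberg_general
    {H : Type*} [NormedAddCommGroup H] [InnerProductSpace ℝ H]
    {E : Type*} [Fintype E] [DecidableEq E]
    (P : H ≃ₗᵢ[ℝ] H) (φ₀ : E → H) (n_t : ℕ)
    (φ : ℕ → E → H) (hφ : ∀ j ε, φ j ε = (⇑P)^[j] (φ₀ ε))
    (hind : LinearIndependent ℝ (fun p : Fin n_t × E => φ (p.1 : ℕ) p.2))
    (v : Fin n_t → E → H)
    (hv : ∀ (j l : Fin n_t) (ε ε' : E),
      ⟪v j ε, v l ε'⟫ = if (j, ε) = (l, ε') then 1 else 0)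
    (hcausal : ∀ j : Fin n_t,
      Submodule.span ℝ {x : H | ∃ (k : Fin n_t) (α : E), k ≤ j ∧ x = v k α} =
      Submodule.span ℝ {x : H | ∃ (k : Fin n_t) (α : E), k ≤ j ∧ x = φ (k : ℕ) α})
    (R : Matrix (Fin n_t × E) (Fin n_t × E) ℝ)
    (hR : ∀ (k l : Fin n_t) (α ε' : E), R (k, α) (l, ε') = ⟪v k α, φ (l : ℕ) ε'⟫)
    (PROM : Matrix (Fin n_t × E) (Fin n_t × E) ℝ)
    (hPROM : ∀ (k l : Fin n_t) (α ε' : E),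
      PROM (k, α) (l, ε') = ⟪v k α, P (v l ε')⟫) :
    (∀ (j l : Fin n_t) (ε ε' : E), (l : ℕ) + 1 < (j : ℕ) → PROM (j, ε) (l, ε') = 0) ∧
    (∀ (l : Fin n_t) (hl : (l : ℕ) + 1 < n_t),
      IsUnit (Matrix.of fun α ε' : E => PROM (⟨(l : ℕ) + 1, hl⟩, α) (l, ε')) ∧
      (Matrix.of fun α ε' : E => PROM (⟨(l : ℕ) + 1, hl⟩, α) (l, ε')) *
        (Matrix.of fun α ε' : E => R (l, α) (l, ε')) =
        (Matrix.of fun α ε' : E => R (⟨(l : ℕ) + 1, hl⟩, α) (⟨(l : ℕ) + 1, hl⟩, ε'))) := by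
  have hvo : Orthonormal ℝ fun p : Fin n_t × E => v p.1 p.2 :=
    orthonormal_iff_ite.mpr fun p q => hv p.1 q.1 p.2 q.2
  have hK : ∀ j, blockSpan v j = blockSpan (fun (k : Fin n_t) α => φ k α) j := hcausal
  have hP : ∀ j ε, P (φ j ε) = φ (j + 1) ε := fun j ε => by
    simp only [hφ, Function.iterate_succ_apply']
  have hφv : ∀ (l : Fin n_t) ε, φ l ε ∈ span ℝ (Set.range fun p : Fin n_t × E => v p.1 p.2) :=
    fun l ε => blockSpan_le_span_range v l <| (hK l).symm ▸
      mem_blockSpan (fun (k : Fin n_t) α => φ k α) le_rfl ε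
  have hhess : ∀ (j l : Fin n_t) (ε ε' : E), (l : ℕ) + 1 < j → PROM (j, ε) (l, ε') = 0 :=
    fun j l ε ε' hlj => (hPROM _ _ _ _).trans <|
      inner_map_eq_zero_of_succ_lt_of_blockSpan_eq hvo hK hP hlj ε ε'
  have hRtri : R.BlockTriangular Prod.fst := fun p q hqp =>
    (hR _ _ _ _).trans <| inner_eq_zero_of_lt_of_blockSpan_eq hvo hK hqp _ _
  have hRunit : IsUnit R := by
    rw [show R = of fun p q => ⟪v p.1 p.2, φ q.1 q.2⟫ from by ext p q; exact hR _ _ _ _]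
    exact hvo.isUnit_of_linearIndependent_of_mem_span hind fun q => hφv _ _
  refine ⟨hhess, fun l hl => ?_⟩
  set l' : Fin n_t := ⟨l + 1, hl⟩
  have hmul : (of fun α ε' => PROM (l', α) (l, ε')) * (of fun α ε' => R (l, α) (l, ε')) =
      of fun α ε' => R (l', α) (l', ε') := by
    ext α ε'
    calc _ = (PROM * R) (l', α) (l, ε') :=
          (blockHessenberg_mul_blockTriangular_apply_subdiagonal
            (fun i j => hhess i.1 j.1 i.2 j.2) hRtri rfl α ε').symm
      _ = ⟪v l' α, P (φ l ε')⟫ := by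
          rw [mul_apply, hvo.inner_map_eq_sum_of_mem_span P _ (hφv l ε')]
          simp [hPROM, hR]
      _ = R (l', α) (l', ε') := by rw [hR, ← hP]
  have hdiag := hRtri.isUnit_diagonalBlock hRunit
  exact ⟨(Units.isUnit_mul_units _ (hdiag l).unit).mp (hmul ▸ hdiag l'), hmul⟩

/-- Assume the snapshots are linearly independent. Then the ROM propagator
is an unreduced block upper Hessenberg matrix: (a) `(P^ROM)_{(j,ε),(l,ε')} = 0` whenever
`j > l + 1`; and (b) for every `l ≤ n_t − 2`, the subdiagonal `E×E` block is invertible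
and satisfies `(P^ROM)_{l+1,l} · R_{l,l} = R_{l+1,l+1}`. -/
theorem rom_propagator_block_hessenberg
    {H : Type*} [NormedAddCommGroup H] [InnerProductSpace ℝ H]
    {E : Type*} [Fintype E] [Nonempty E] [DecidableEq E]
    (P : H ≃ₗᵢ[ℝ] H) (φ₀ : E → H) (n_t : ℕ) (hn : 1 ≤ n_t)
    (φ : ℕ → E → H) (hφ : ∀ j ε, φ j ε = (⇑P)^[j] (φ₀ ε))
    (hind : LinearIndependent ℝ (fun p : Fin n_t × E => φ (p.1 : ℕ) p.2))
    (v : Fin n_t → E → H)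
    (hv : ∀ (j l : Fin n_t) (ε ε' : E),
      ⟪v j ε, v l ε'⟫ = if (j, ε) = (l, ε') then 1 else 0)
    (hcausal : ∀ j : Fin n_t,
      Submodule.span ℝ {x : H | ∃ (k : Fin n_t) (α : E), k ≤ j ∧ x = v k α} =
      Submodule.span ℝ {x : H | ∃ (k : Fin n_t) (α : E), k ≤ j ∧ x = φ (k : ℕ) α})
    (R : Matrix (Fin n_t × E) (Fin n_t × E) ℝ)
    (hR : ∀ (k l : Fin n_t) (α ε' : E), R (k, α) (l, ε') = ⟪v k α, φ (l : ℕ) ε'⟫)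
    (PROM : Matrix (Fin n_t × E) (Fin n_t × E) ℝ)
    (hPROM : ∀ (k l : Fin n_t) (α ε' : E),
      PROM (k, α) (l, ε') = ⟪v k α, P (v l ε')⟫) :
    (∀ (j l : Fin n_t) (ε ε' : E), (l : ℕ) + 1 < (j : ℕ) → PROM (j, ε) (l, ε') = 0) ∧
    (∀ (l : Fin n_t) (hl : (l : ℕ) + 1 < n_t),
      IsUnit (Matrix.of fun α ε' : E => PROM (⟨(l : ℕ) + 1, hl⟩, α) (l, ε')) ∧
      (Matrix.of fun α ε' : E => PROM (⟨(l : ℕ) + 1, hl⟩, α) (l, ε')) *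
        (Matrix.of fun α ε' : E => R (l, α) (l, ε')) =
        (Matrix.of fun α ε' : E => R (⟨(l : ℕ) + 1, hl⟩, α) (⟨(l : ℕ) + 1, hl⟩, ε'))) :=
  rom_propagator_block_hessenberg_general P φ₀ n_t φ hφ hind v hv hcausal R hR PROM hPROM
end

section
/- The stiffness matrix factors through the ROM propagator: S = Rᵀ * P^ROM * R, i.e., for all j, l < n_t and ε, ε' ∈ E, ⟪φ_j ε, P (φ_l ε')⟫ = Σ_{(a,α),(b,β)} ⟪v_a α, φ_j ε⟫ · ⟪v_a α, P (v_b β)⟫ · ⟪v_b β, φ_l ε'⟫. -/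
open Matrix
open scoped RealInnerProductSpace

/-- The stiffness matrix factors through the ROM propagator:
`S = Rᵀ * P^ROM * R`. -/
theorem stiffness_factors_through_rom_propagator
    {H : Type*} [NormedAddCommGroup H] [InnerProductSpace ℝ H]
    {E : Type*} [Fintype E] [Nonempty E] [DecidableEq E]
    (P : H ≃ₗᵢ[ℝ] H) (φ₀ : E → H) (n_t : ℕ) (hn : 1 ≤ n_t)
    (φ : ℕ → E → H) (hφ : ∀ j ε, φ j ε = (⇑P)^[j] (φ₀ ε))
    (S : Matrix (Fin n_t × E) (Fin n_t × E) ℝ)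
    (hS : ∀ (j l : Fin n_t) (ε ε' : E),
      S (j, ε) (l, ε') = ⟪φ (j : ℕ) ε, P (φ (l : ℕ) ε')⟫)
    (v : Fin n_t → E → H)
    (hv : ∀ (j l : Fin n_t) (ε ε' : E),
      ⟪v j ε, v l ε'⟫ = if (j, ε) = (l, ε') then 1 else 0)
    (hcausal : ∀ j : Fin n_t,
      Submodule.span ℝ {x : H | ∃ (k : Fin n_t) (α : E), k ≤ j ∧ x = v k α} =
      Submodule.span ℝ {x : H | ∃ (k : Fin n_t) (α : E), k ≤ j ∧ x = φ (k : ℕ) α})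
    (R : Matrix (Fin n_t × E) (Fin n_t × E) ℝ)
    (hR : ∀ (k l : Fin n_t) (α ε' : E), R (k, α) (l, ε') = ⟪v k α, φ (l : ℕ) ε'⟫)
    (PROM : Matrix (Fin n_t × E) (Fin n_t × E) ℝ)
    (hPROM : ∀ (k l : Fin n_t) (α ε' : E),
      PROM (k, α) (l, ε') = ⟪v k α, P (v l ε')⟫) :
    S = Rᵀ * PROM * R := by
  set w : Fin n_t × E → H := fun p => v p.1 p.2 with hw
  have hortho : Orthonormal ℝ w := by
    rw [orthonormal_iff_ite]
    intro p q
    simpa [hw] using hv p.1 q.1 p.2 q.2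
  have hspan : ∀ (j : Fin n_t) (ε : E),
      φ (j : ℕ) ε ∈ Submodule.span ℝ (Set.range w) := by
    intro j ε
    have h1 : φ (j : ℕ) ε ∈
        Submodule.span ℝ {x : H | ∃ (k : Fin n_t) (α : E), k ≤ j ∧ x = φ (k : ℕ) α} :=
      Submodule.subset_span ⟨j, ε, le_refl _, rfl⟩
    rw [← hcausal j] at h1
    refine Submodule.span_mono ?_ h1
    rintro x ⟨k, α, -, rfl⟩
    exact ⟨(k, α), rfl⟩
  have hrep : ∀ (j : Fin n_t) (ε : E),
      φ (j : ℕ) ε = ∑ p, ⟪w p, φ (j : ℕ) ε⟫ • w p := by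
    intro j ε
    obtain ⟨c, hc⟩ := (Submodule.mem_span_range_iff_exists_fun ℝ).mp (hspan j ε)
    have hcoef : ∀ p, ⟪w p, φ (j : ℕ) ε⟫ = c p := by
      intro p
      rw [← hc]
      exact hortho.inner_right_fintype c p
    calc φ (j : ℕ) ε = ∑ p, c p • w p := hc.symm
      _ = ∑ p, ⟪w p, φ (j : ℕ) ε⟫ • w p :=
        Finset.sum_congr rfl fun p _ => by rw [hcoef p]
  ext ⟨j, ε⟩ ⟨l, ε'⟩
  rw [hS j l ε ε']
  conv_lhs => rw [hrep j ε, hrep l ε']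
  simp only [map_sum, LinearIsometryEquiv.map_smul, sum_inner, inner_sum, real_inner_smul_left,
    real_inner_smul_right, Matrix.mul_apply, Matrix.transpose_apply]
  simp only [hR, hPROM]
  refine Finset.sum_congr rfl fun a _ => ?_
  rw [Finset.sum_mul]
  refine Finset.sum_congr rfl fun b _ => ?_
  simp only [hw]
  ring
end

section
/- Assume the family of snapshots {φ_j ε : j < n_t, ε ∈ E} is linearly independent (so the mass matrix M is invertible). Let g : ℕ → Matrix (Fin n_t × E) E ℝ be any sequence of Galerkin coefficient matrices satisfying the initial condition (g 0)_{(k,α),ε} = 1 if k = 0 and α = ε, and 0 otherwise, together with the Galerkin time stepping equation M * g (j+1) = S * g j for all j ∈ ℕ. Then the first n_t Galerkin coefficient matrices are trivial: for every j ≤ n_t − 1, (g j)_{(k,α),ε} = 1 if k = j and α = ε, and 0 otherwise. -/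
open Matrix
open scoped RealInnerProductSpace

/-- Assume the snapshots are linearly independent. Any sequence of Galerkin
coefficient matrices satisfying the initial condition `g 0 = i_0` and the Galerkin time
stepping `M * g (j+1) = S * g j` has trivial first `n_t` coefficient matrices:
`g j = i_j` for `j ≤ n_t − 1`. -/
theorem galerkin_coefficients_trivial
    {H : Type*} [NormedAddCommGroup H] [InnerProductSpace ℝ H]
    {E : Type*} [Fintype E] [Nonempty E] [DecidableEq E]
    (P : H ≃ₗᵢ[ℝ] H) (φ₀ : E → H) (n_t : ℕ) (hn : 1 ≤ n_t)
    (φ : ℕ → E → H) (hφ : ∀ j ε, φ j ε = (⇑P)^[j] (φ₀ ε))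
    (hind : LinearIndependent ℝ (fun p : Fin n_t × E => φ (p.1 : ℕ) p.2))
    (M : Matrix (Fin n_t × E) (Fin n_t × E) ℝ)
    (hM : ∀ (j l : Fin n_t) (ε ε' : E),
      M (j, ε) (l, ε') = ⟪φ (j : ℕ) ε, φ (l : ℕ) ε'⟫)
    (S : Matrix (Fin n_t × E) (Fin n_t × E) ℝ)
    (hS : ∀ (j l : Fin n_t) (ε ε' : E),
      S (j, ε) (l, ε') = ⟪φ (j : ℕ) ε, P (φ (l : ℕ) ε')⟫)
    (g : ℕ → Matrix (Fin n_t × E) E ℝ)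
    (hg0 : ∀ (k : Fin n_t) (α ε : E),
      g 0 (k, α) ε = if (k : ℕ) = 0 ∧ α = ε then 1 else 0)
    (hgstep : ∀ j : ℕ, M * g (j + 1) = S * g j) :
    ∀ j : ℕ, j ≤ n_t - 1 → ∀ (k : Fin n_t) (α ε : E),
      g j (k, α) ε = if (k : ℕ) = j ∧ α = ε then 1 else 0 := by
  -- injectivity of M
  have hinj : ∀ x : (Fin n_t × E) → ℝ, M.mulVec x = 0 → x = 0 := by
    intro x hx
    have hsum : (∑ p : Fin n_t × E, x p • φ (p.1 : ℕ) p.2) = 0 := by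
      have h0 : ⟪∑ p : Fin n_t × E, x p • φ (p.1 : ℕ) p.2,
          ∑ q : Fin n_t × E, x q • φ (q.1 : ℕ) q.2⟫ = 0 := by
        rw [sum_inner]
        have : ∀ p : Fin n_t × E,
            ⟪x p • φ (p.1 : ℕ) p.2, ∑ q : Fin n_t × E, x q • φ (q.1 : ℕ) q.2⟫
              = x p * M.mulVec x p := by
          intro p
          rw [inner_sum, Matrix.mulVec, dotProduct]
          rw [Finset.mul_sum]
          refine Finset.sum_congr rfl fun q _ => ?_
          rw [real_inner_smul_left, real_inner_smul_right,
            show M p q = ⟪φ (p.1 : ℕ) p.2, φ (q.1 : ℕ) q.2⟫ from hM p.1 q.1 p.2 q.2]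
          ring
        rw [Finset.sum_congr rfl fun p _ => this p]
        simp [hx]
      exact inner_self_eq_zero.mp h0
    funext p
    exact Fintype.linearIndependent_iff.mp hind x hsum p
  intro j
  induction j with
  | zero => intro _ k α ε; exact hg0 k α ε
  | succ j ih =>
    intro hj
    have hj1 : j + 1 < n_t := by omega
    have hjn : j < n_t := by omega
    have ihj := ih (by omega)
    -- the defect vector for column ε
    intro k α ε
    set c : Fin n_t × E := (⟨j + 1, hj1⟩, ε) with hc
    set x : (Fin n_t × E) → ℝ :=
      fun q => g (j + 1) q ε - (if q = c then 1 else 0) with hxdef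
    have hx0 : M.mulVec x = 0 := by
      funext p
      have hMg : M.mulVec (fun q => g (j + 1) q ε) p = (M * g (j + 1)) p ε := rfl
      have hstep := congrFun (congrFun (hgstep j) p) ε
      have hSg : (S * g j) p ε = S p (⟨j, hjn⟩, ε) := by
        rw [Matrix.mul_apply]
        rw [Finset.sum_eq_single ((⟨j, hjn⟩ : Fin n_t), ε)]
        · rw [show g j (⟨j, hjn⟩, ε) ε = if ((⟨j, hjn⟩ : Fin n_t) : ℕ) = j ∧ ε = ε
              then 1 else 0 from ihj _ _ _]
          simp
        · intro q _ hq
          rw [show g j q ε = if (q.1 : ℕ) = j ∧ q.2 = ε then 1 else 0 from ihj q.1 q.2 ε]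
          have hne : ¬((q.1 : ℕ) = j ∧ q.2 = ε) := by
            rintro ⟨h1, h2⟩
            exact hq (Prod.ext (Fin.ext h1) h2)
          simp [hne]
        · simp
      have hSM : S p (⟨j, hjn⟩, ε) = M p c := by
        rw [show S p (⟨j, hjn⟩, ε) = ⟪φ (p.1 : ℕ) p.2, P (φ j ε)⟫ from hS p.1 _ p.2 _,
          show M p c = ⟪φ (p.1 : ℕ) p.2, φ (j + 1) ε⟫ from hM p.1 _ p.2 _]
        congr 1
        rw [hφ j ε, hφ (j + 1) ε, Function.iterate_succ_apply']
      have hMc : M.mulVec (fun q => (if q = c then (1:ℝ) else 0)) p = M p c := by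
        rw [Matrix.mulVec, dotProduct]
        simp
      have : M.mulVec x p
          = M.mulVec (fun q => g (j + 1) q ε) p
            - M.mulVec (fun q => (if q = c then (1:ℝ) else 0)) p := by
        rw [Matrix.mulVec, Matrix.mulVec, Matrix.mulVec, dotProduct, dotProduct,
          dotProduct, ← Finset.sum_sub_distrib]
        refine Finset.sum_congr rfl fun q _ => ?_
        rw [hxdef]; ring
      rw [Pi.zero_apply, this, hMg, hstep, hSg, hSM, hMc, sub_self]
    have hx := congrFun (hinj x hx0) (k, α)
    rw [hxdef] at hx
    simp only [Pi.zero_apply] at hx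
    have : g (j + 1) (k, α) ε = if (k, α) = c then 1 else 0 := by linarith [hx]
    rw [this]
    simp [hc, Prod.ext_iff, Fin.ext_iff]
end

section
/- For every j ≤ n_t − 2, the ROM propagator advances the ROM snapshots exactly: P^ROM * (R · i_j) = R · i_{j+1}, where i_j denotes the j-th block column selector, i.e., for all (k,α) ∈ Fin n_t × E and ε ∈ E, Σ_{(l,β)} (P^ROM)_{(k,α),(l,β)} · R_{(l,β),(j,ε)} = R_{(k,α),(j+1,ε)}. -/
open Matrix
open scoped RealInnerProductSpace

/-- For every `j ≤ n_t − 2`, the ROM propagator advances the ROM snapshots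
exactly: `P^ROM * (R · i_j) = R · i_{j+1}`. -/
theorem rom_propagator_time_steps_forward
    {H : Type*} [NormedAddCommGroup H] [InnerProductSpace ℝ H]
    {E : Type*} [Fintype E] [Nonempty E] [DecidableEq E]
    (P : H ≃ₗᵢ[ℝ] H) (φ₀ : E → H) (n_t : ℕ) (hn : 1 ≤ n_t)
    (φ : ℕ → E → H) (hφ : ∀ j ε, φ j ε = (⇑P)^[j] (φ₀ ε))
    (v : Fin n_t → E → H)
    (hv : ∀ (j l : Fin n_t) (ε ε' : E),
      ⟪v j ε, v l ε'⟫ = if (j, ε) = (l, ε') then 1 else 0)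
    (hcausal : ∀ j : Fin n_t,
      Submodule.span ℝ {x : H | ∃ (k : Fin n_t) (α : E), k ≤ j ∧ x = v k α} =
      Submodule.span ℝ {x : H | ∃ (k : Fin n_t) (α : E), k ≤ j ∧ x = φ (k : ℕ) α})
    (R : Matrix (Fin n_t × E) (Fin n_t × E) ℝ)
    (hR : ∀ (k l : Fin n_t) (α ε' : E), R (k, α) (l, ε') = ⟪v k α, φ (l : ℕ) ε'⟫)
    (PROM : Matrix (Fin n_t × E) (Fin n_t × E) ℝ)
    (hPROM : ∀ (k l : Fin n_t) (α ε' : E),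
      PROM (k, α) (l, ε') = ⟪v k α, P (v l ε')⟫) :
    ∀ (j : Fin n_t) (hj : (j : ℕ) + 1 < n_t) (k : Fin n_t) (α ε : E),
      ∑ p : Fin n_t × E, PROM (k, α) p * R p (j, ε)
        = R (k, α) (⟨(j : ℕ) + 1, hj⟩, ε) := by
  intro j hj k α ε
  classical
  set w : Fin n_t × E → H := fun p => v p.1 p.2 with hw
  have hortho : Orthonormal ℝ w := by
    rw [orthonormal_iff_ite]
    intro p q
    simpa [hw, Prod.ext_iff] using hv p.1 q.1 p.2 q.2
  have hlastlt : n_t - 1 < n_t := by omega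
  have hmem : φ (j : ℕ) ε ∈ Submodule.span ℝ (Set.range w) := by
    have h1 : φ (j : ℕ) ε ∈ Submodule.span ℝ
        {x : H | ∃ (k : Fin n_t) (α : E), k ≤ ⟨n_t - 1, hlastlt⟩ ∧ x = φ (k : ℕ) α} :=
      Submodule.subset_span ⟨j, ε, by
        constructor
        · exact Fin.mk_le_mk.mpr (by omega) |>.trans_eq rfl |>.trans_eq rfl
        · rfl⟩
    rw [← hcausal ⟨n_t - 1, hlastlt⟩] at h1
    refine Submodule.span_mono ?_ h1
    rintro x ⟨k, a, -, rfl⟩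
    exact ⟨(k, a), rfl⟩
  obtain ⟨c, hc⟩ := (Submodule.mem_span_range_iff_exists_fun ℝ).mp hmem
  have hcoef : ∀ p : Fin n_t × E, R p (j, ε) = c p := by
    intro p
    rw [show R p (j, ε) = ⟪v p.1 p.2, φ (j : ℕ) ε⟫ from hR p.1 j p.2 ε, ← hc]
    exact hortho.inner_right_fintype c p
  have hstep : P (φ (j : ℕ) ε) = φ ((j : ℕ) + 1) ε := by
    rw [hφ, hφ, Function.iterate_succ_apply']
  calc ∑ p : Fin n_t × E, PROM (k, α) p * R p (j, ε)
      = ∑ p : Fin n_t × E, ⟪v k α, c p • P (w p)⟫ := by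
        refine Finset.sum_congr rfl fun p _ => ?_
        rw [hPROM k p.1 α p.2, hcoef p, real_inner_smul_right]
        ring
    _ = ⟪v k α, P (∑ p : Fin n_t × E, c p • w p)⟫ := by
        rw [← inner_sum]
        congr 1
        simp [map_sum]
    _ = R (k, α) (⟨(j : ℕ) + 1, hj⟩, ε) := by
        rw [hc, hstep, hR]
end

section
/- For every j ≤ n_t − 2, the transpose of the ROM propagator steps the ROM snapshots backward in time exactly: (P^ROM)ᵀ * (R · i_{j+1}) = R · i_j, i.e., for all (k,α) ∈ Fin n_t × E and ε ∈ E, Σ_{(l,β)} (P^ROM)_{(l,β),(k,α)} · R_{(l,β),(j+1,ε)} = R_{(k,α),(j,ε)}. -/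
open Matrix
open scoped RealInnerProductSpace

/-- For every `j ≤ n_t − 2`, the transpose of the ROM propagator steps the
ROM snapshots backward in time exactly: `(P^ROM)ᵀ * (R · i_{j+1}) = R · i_j`. -/
theorem rom_propagator_time_steps_backward
    {H : Type*} [NormedAddCommGroup H] [InnerProductSpace ℝ H]
    {E : Type*} [Fintype E] [Nonempty E] [DecidableEq E]
    (P : H ≃ₗᵢ[ℝ] H) (φ₀ : E → H) (n_t : ℕ) (hn : 1 ≤ n_t)
    (φ : ℕ → E → H) (hφ : ∀ j ε, φ j ε = (⇑P)^[j] (φ₀ ε))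
    (v : Fin n_t → E → H)
    (hv : ∀ (j l : Fin n_t) (ε ε' : E),
      ⟪v j ε, v l ε'⟫ = if (j, ε) = (l, ε') then 1 else 0)
    (hcausal : ∀ j : Fin n_t,
      Submodule.span ℝ {x : H | ∃ (k : Fin n_t) (α : E), k ≤ j ∧ x = v k α} =
      Submodule.span ℝ {x : H | ∃ (k : Fin n_t) (α : E), k ≤ j ∧ x = φ (k : ℕ) α})
    (R : Matrix (Fin n_t × E) (Fin n_t × E) ℝ)
    (hR : ∀ (k l : Fin n_t) (α ε' : E), R (k, α) (l, ε') = ⟪v k α, φ (l : ℕ) ε'⟫)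
    (PROM : Matrix (Fin n_t × E) (Fin n_t × E) ℝ)
    (hPROM : ∀ (k l : Fin n_t) (α ε' : E),
      PROM (k, α) (l, ε') = ⟪v k α, P (v l ε')⟫) :
    ∀ (j : Fin n_t) (hj : (j : ℕ) + 1 < n_t) (k : Fin n_t) (α ε : E),
      ∑ p : Fin n_t × E, PROM p (k, α) * R p (⟨(j : ℕ) + 1, hj⟩, ε)
        = R (k, α) (j, ε) := by
  intro j hj k α ε
  set w : Fin n_t × E → H := fun p => v p.1 p.2 with hw
  have hov : ∀ p q : Fin n_t × E, ⟪w p, w q⟫ = if p = q then 1 else 0 := by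
    intro p q
    have := hv p.1 q.1 p.2 q.2
    simpa [hw, Prod.ext_iff] using this
  set j' : Fin n_t := ⟨(j : ℕ) + 1, hj⟩ with hj'
  set x : H := φ ((j : ℕ) + 1) ε with hx
  have hmem : x ∈ Submodule.span ℝ (Set.range w) := by
    have h1 : x ∈ Submodule.span ℝ
        {y : H | ∃ (k : Fin n_t) (α : E), k ≤ j' ∧ y = φ (k : ℕ) α} :=
      Submodule.subset_span ⟨j', ε, le_refl _, rfl⟩
    rw [← hcausal j'] at h1
    refine Submodule.span_mono ?_ h1
    rintro y ⟨kk, a, _, rfl⟩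
    exact ⟨(kk, a), rfl⟩
  set u : H := ∑ p : Fin n_t × E, ⟪w p, x⟫ • w p with hu
  have horth : ∀ q, ⟪w q, x - u⟫ = 0 := by
    intro q
    simp [hu, inner_sub_right, inner_sum, inner_smul_right, hov, real_inner_comm (w _) (w q)]
  have humem : u ∈ Submodule.span ℝ (Set.range w) :=
    Submodule.sum_mem _ fun p _ => Submodule.smul_mem _ _ (Submodule.subset_span ⟨p, rfl⟩)
  have hxu : x - u ∈ Submodule.span ℝ (Set.range w) := Submodule.sub_mem _ hmem humem
  have hzero : ⟪x - u, x - u⟫ = 0 := by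
    refine Submodule.span_induction
      (p := fun y _ => ⟪y, x - u⟫ = 0) ?_ ?_ ?_ ?_ hxu
    · rintro y ⟨p, rfl⟩; exact horth p
    · simp
    · intro a b _ _ ha hb; rw [inner_add_left, ha, hb]; ring
    · intro c a _ ha; rw [real_inner_smul_left, ha]; ring
  have hxeq : x = u := sub_eq_zero.mp (inner_self_eq_zero.mp hzero)
  have hstep : x = P (φ (j : ℕ) ε) := by
    rw [hx, hφ, hφ, Function.iterate_succ_apply']
  calc ∑ p : Fin n_t × E, PROM p (k, α) * R p (j', ε)
      = ∑ p : Fin n_t × E, ⟪w p, P (w (k, α))⟫ * ⟪w p, x⟫ := by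
        refine Finset.sum_congr rfl fun p _ => ?_
        rw [show PROM p (k, α) = ⟪w p, P (w (k, α))⟫ from hPROM p.1 k p.2 α,
          show R p (j', ε) = ⟪w p, x⟫ from hR p.1 j' p.2 ε]
    _ = ⟪P (w (k, α)), u⟫ := by
        rw [hu, inner_sum]
        refine Finset.sum_congr rfl fun p _ => ?_
        rw [real_inner_smul_right, real_inner_comm (P (w (k, α))) (w p)]
        ring
    _ = ⟪P (w (k, α)), P (φ (j : ℕ) ε)⟫ := by rw [← hxeq, hstep]
    _ = ⟪w (k, α), φ (j : ℕ) ε⟫ := P.inner_map_map _ _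
    _ = R (k, α) (j, ε) := (hR k j α ε).symm
end

section
/- Assume the family of snapshots {φ_j ε : j < n_t, ε ∈ E} is linearly independent. Then the ROM propagator behaves as a unitary matrix on the first n_t − 1 block columns: for every j ≤ n_t − 2 and ε ∈ E, the ((j,ε))-th column of (P^ROM)ᵀ * P^ROM equals the corresponding column of the identity matrix, i.e., ((P^ROM)ᵀ * P^ROM)_{(k,α),(j,ε)} = 1 if (k,α) = (j,ε) and 0 otherwise. -/
open Matrix
open scoped RealInnerProductSpace

/-- Assume the snapshots are linearly independent. Then the ROM propagator
behaves as a unitary matrix on the first `n_t − 1` block columns: for every `j ≤ n_t − 2`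
and `ε ∈ E`, the `(j,ε)`-th column of `(P^ROM)ᵀ * P^ROM` equals that of the identity. -/
theorem rom_propagator_unitary_on_first_columns
    {H : Type*} [NormedAddCommGroup H] [InnerProductSpace ℝ H]
    {E : Type*} [Fintype E] [Nonempty E] [DecidableEq E]
    (P : H ≃ₗᵢ[ℝ] H) (φ₀ : E → H) (n_t : ℕ) (hn : 1 ≤ n_t)
    (φ : ℕ → E → H) (hφ : ∀ j ε, φ j ε = (⇑P)^[j] (φ₀ ε))
    (hind : LinearIndependent ℝ (fun p : Fin n_t × E => φ (p.1 : ℕ) p.2))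
    (v : Fin n_t → E → H)
    (hv : ∀ (j l : Fin n_t) (ε ε' : E),
      ⟪v j ε, v l ε'⟫ = if (j, ε) = (l, ε') then 1 else 0)
    (hcausal : ∀ j : Fin n_t,
      Submodule.span ℝ {x : H | ∃ (k : Fin n_t) (α : E), k ≤ j ∧ x = v k α} =
      Submodule.span ℝ {x : H | ∃ (k : Fin n_t) (α : E), k ≤ j ∧ x = φ (k : ℕ) α})
    (PROM : Matrix (Fin n_t × E) (Fin n_t × E) ℝ)
    (hPROM : ∀ (k l : Fin n_t) (α ε' : E),
      PROM (k, α) (l, ε') = ⟪v k α, P (v l ε')⟫) :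
    ∀ (j : Fin n_t), (j : ℕ) + 1 < n_t → ∀ (ε : E) (k : Fin n_t) (α : E),
      (PROMᵀ * PROM) (k, α) (j, ε) = if (k, α) = (j, ε) then 1 else 0 := by
  intro j hj ε k α
  set e : Fin n_t × E → H := fun p => v p.1 p.2 with he
  set j1 : Fin n_t := ⟨(j : ℕ) + 1, hj⟩ with hj1
  -- P maps the span of snapshots up to j into the span of snapshots up to j+1
  have hstep : ∀ y ∈ Submodule.span ℝ
      {x : H | ∃ (k : Fin n_t) (α : E), k ≤ j ∧ x = φ (k : ℕ) α},
      P y ∈ Submodule.span ℝ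
      {x : H | ∃ (k : Fin n_t) (α : E), k ≤ j1 ∧ x = φ (k : ℕ) α} := by
    intro y hy
    induction hy using Submodule.span_induction with
    | mem x hx =>
      obtain ⟨l, β, hl, rfl⟩ := hx
      apply Submodule.subset_span
      have hl' : (l : ℕ) ≤ (j : ℕ) := hl
      have hlt : (l : ℕ) + 1 < n_t := lt_of_le_of_lt (Nat.succ_le_succ hl') hj
      refine ⟨⟨(l : ℕ) + 1, hlt⟩, β, ?_, ?_⟩
      · exact Nat.succ_le_succ hl'
      · rw [hφ, hφ]
        simp [Function.iterate_succ_apply']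
    | zero => simp
    | add x y _ _ hx hy => rw [map_add]; exact Submodule.add_mem _ hx hy
    | smul a x _ hx => rw [_root_.map_smul]; exact Submodule.smul_mem _ a hx
  have hvmem : v j ε ∈ Submodule.span ℝ
      {x : H | ∃ (k : Fin n_t) (α : E), k ≤ j ∧ x = φ (k : ℕ) α} := by
    rw [← hcausal j]
    exact Submodule.subset_span ⟨j, ε, le_refl j, rfl⟩
  have hPmem : P (v j ε) ∈ Submodule.span ℝ (Set.range e) := by
    have h1 := hstep _ hvmem
    rw [← hcausal j1] at h1
    refine Submodule.span_mono ?_ h1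
    rintro x ⟨l, β, _, rfl⟩
    exact ⟨(l, β), rfl⟩
  obtain ⟨c, hc⟩ := (Submodule.mem_span_range_iff_exists_fun ℝ).mp hPmem
  have hee : ∀ p q : Fin n_t × E, ⟪e p, e q⟫ = if p = q then 1 else 0 := by
    intro p q
    show ⟪v p.1 p.2, v q.1 q.2⟫ = _
    rw [hv, Prod.mk.eta, Prod.mk.eta]
  have hcoef : ∀ p : Fin n_t × E, ⟪e p, P (v j ε)⟫ = c p := by
    intro p
    rw [← hc, inner_sum]
    have : ∀ q : Fin n_t × E, ⟪e p, c q • e q⟫ = if q = p then c q else 0 := by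
      intro q
      rw [real_inner_smul_right, hee]
      by_cases h : p = q
      · simp [h]
      · rw [if_neg h, if_neg (Ne.symm h), mul_zero]
    simp only [this]
    simp
  have hmul : (PROMᵀ * PROM) (k, α) (j, ε)
      = ∑ p : Fin n_t × E, ⟪e p, P (v k α)⟫ * ⟪e p, P (v j ε)⟫ := by
    rw [Matrix.mul_apply]
    refine Finset.sum_congr rfl fun p _ => ?_
    obtain ⟨l, β⟩ := p
    rw [Matrix.transpose_apply, hPROM, hPROM]
  rw [hmul]
  calc ∑ p : Fin n_t × E, ⟪e p, P (v k α)⟫ * ⟪e p, P (v j ε)⟫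
      = ⟪∑ p : Fin n_t × E, c p • e p, P (v k α)⟫ := by
        rw [sum_inner]
        refine Finset.sum_congr rfl fun p _ => ?_
        rw [real_inner_smul_left, hcoef, real_inner_comm]
        ring
    _ = ⟪P (v j ε), P (v k α)⟫ := by rw [hc]
    _ = ⟪v j ε, v k α⟫ := P.inner_map_map _ _
    _ = if (k, α) = (j, ε) then 1 else 0 := by
        rw [hv]
        congr 1
        simp [eq_comm]
end

section
/- Let H be a real inner product space and L : H →L[ℝ] H a skew-adjoint continuous linear operator, i.e., ⟪L x, y⟫ = −⟪x, L y⟫ for all x, y ∈ H. Let t_s > 0, let f, g : ℝ → H be continuous with f t = 0 and g t = 0 whenever |t| ≥ t_s, and let ψ_f, ψ_g : ℝ → H satisfy HasDerivAt ψ_f (f t − L (ψ_f t)) t and HasDerivAt ψ_g (g t − L (ψ_g t)) t for all t ∈ ℝ, together with the causality conditions ψ_f t = 0 and ψ_g t = 0 for all t ≤ −t_s. Then for every τ ≥ t_s and every σ ≥ 0, ⟪ψ_f τ, ψ_g (τ + σ)⟫ = ∫_{−t_s}^{t_s} ⟪f t, ψ_g (t + σ)⟫ dt + ∫_{−t_s}^{t_s}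 ⟪ψ_f (t − σ), g t⟫ dt. In particular, the left-hand side is independent of τ ≥ t_s and is determined by the forcing terms paired with the wave fields (the measured data). -/
open scoped RealInnerProductSpace
open Set Function MeasureTheory

/-!
Along two solutions of `ψ' = F - L ψ` the skew-adjointness of `L` cancels the `L`-terms in the
derivative of `t ↦ ⟪ψf t, ψg (t + σ)⟫`, so that this pairing is the integral of the forcings
against the fields, starting from `0` at `-t_s` by causality of `ψf`. The support of `f` and `g`
cuts the integrals down to `[-t_s, t_s]`, once the second one is shifted by `σ` over the whole
line.
-/

theorem support_subset_Ioo_of_forall_le_abs {M : Type*} [Zero M] {F : ℝ → M} {r : ℝ}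
    (hF : ∀ t, r ≤ |t| → F t = 0) : support F ⊆ Ioo (-r) r :=
  fun t ht => abs_lt.1 (lt_of_not_ge fun h => ht (hF t h))

section SkewAdjointEvolution

variable {H : Type*} [NormedAddCommGroup H] [InnerProductSpace ℝ H] {L : H →L[ℝ] H}

theorem support_inner_subset {α : Type*} {p q : α → H} :
    support (fun t => ⟪p t, q t⟫) ⊆ support p ∩ support q := by
  intro t ht
  constructor <;> intro h <;> simp [h] at ht

theorem hasDerivAt_inner_of_skewAdjoint (hL : ∀ x y : H, ⟪L x, y⟫ = -⟪x, L y⟫)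
    {u v : ℝ → H} {a b : H} {t : ℝ} (hu : HasDerivAt u (a - L (u t)) t)
    (hv : HasDerivAt v (b - L (v t)) t) :
    HasDerivAt (fun s => ⟪u s, v s⟫) (⟪a, v t⟫ + ⟪u t, b⟫) t := by
  refine (hu.inner ℝ hv).congr_deriv ?_
  rw [inner_sub_left, inner_sub_right, hL]
  ring

theorem inner_sub_inner_eq_integral_of_skewAdjoint (hL : ∀ x y : H, ⟪L x, y⟫ = -⟪x, L y⟫)
    {u v F G : ℝ → H} (hF : Continuous F) (hG : Continuous G)
    (hu : ∀ t, HasDerivAt u (F t - L (u t)) t) (hv : ∀ t, HasDerivAt v (G t - L (v t)) t)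
    (a b : ℝ) :
    ⟪u b, v b⟫ - ⟪u a, v a⟫ = (∫ t in a..b, ⟪F t, v t⟫) + ∫ t in a..b, ⟪u t, G t⟫ := by
  have hu_cont : Continuous u := continuous_iff_continuousAt.2 fun t => (hu t).continuousAt
  have hv_cont : Continuous v := continuous_iff_continuousAt.2 fun t => (hv t).continuousAt
  have hFv : Continuous fun t => ⟪F t, v t⟫ := by fun_prop
  have huG : Continuous fun t => ⟪u t, G t⟫ := by fun_prop
  rw [← intervalIntegral.integral_add (hFv.intervalIntegrable a b) (huG.intervalIntegrable a b)]
  exact (intervalIntegral.integral_eq_sub_of_hasDerivAt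
    (fun t _ => hasDerivAt_inner_of_skewAdjoint hL (hu t) (hv t))
    ((hFv.add huG).intervalIntegrable a b)).symm

end SkewAdjointEvolution

theorem inner_waves_data_driven_general
    {H : Type*} [NormedAddCommGroup H] [InnerProductSpace ℝ H]
    (L : H →L[ℝ] H) (hL : ∀ x y : H, ⟪L x, y⟫ = -⟪x, L y⟫)
    (t_s : ℝ)
    (f g : ℝ → H) (hfc : Continuous f) (hgc : Continuous g)
    (hfsupp : ∀ t : ℝ, t_s ≤ |t| → f t = 0)
    (hgsupp : ∀ t : ℝ, t_s ≤ |t| → g t = 0)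
    (ψf ψg : ℝ → H)
    (hf : ∀ t : ℝ, HasDerivAt ψf (f t - L (ψf t)) t)
    (hg : ∀ t : ℝ, HasDerivAt ψg (g t - L (ψg t)) t)
    (hfcausal : ∀ t : ℝ, t ≤ -t_s → ψf t = 0) :
    ∀ τ : ℝ, t_s ≤ τ → ∀ σ : ℝ, 0 ≤ σ →
      ⟪ψf τ, ψg (τ + σ)⟫ =
        (∫ t in (-t_s)..t_s, ⟪f t, ψg (t + σ)⟫) +
        (∫ t in (-t_s)..t_s, ⟪ψf (t - σ), g t⟫) := by
  intro τ hτ σ _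
  have hg_shift (t : ℝ) : HasDerivAt (fun s => ψg (s + σ)) (g (t + σ) - L (ψg (t + σ))) t :=
    (hg (t + σ)).comp_add_const t σ
  have energy := inner_sub_inner_eq_integral_of_skewAdjoint hL hfc
    (by fun_prop : Continuous fun t => g (t + σ)) hf hg_shift (-t_s) τ
  rw [hfcausal (-t_s) le_rfl, inner_zero_left, sub_zero] at energy
  have hf_supp := (support_subset_Ioo_of_forall_le_abs hfsupp).trans Ioo_subset_Ioc_self
  have hg_supp := (support_subset_Ioo_of_forall_le_abs hgsupp).trans Ioo_subset_Ioc_self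
  have hsupp_f : support (fun t => ⟪f t, ψg (t + σ)⟫) ⊆ Ioc (-t_s) t_s :=
    (support_inner_subset.trans inter_subset_left).trans hf_supp
  have hsupp_g : support (fun t => ⟪ψf t, g (t + σ)⟫) ⊆ Ioc (-t_s) τ := by
    intro t ht
    obtain ⟨hψ, hgt⟩ := support_inner_subset ht
    exact ⟨lt_of_not_ge fun h => hψ (hfcausal t h), by linarith [(hg_supp hgt).2]⟩
  have hsupp_g' : support (fun t => ⟪ψf (t - σ), g t⟫) ⊆ Ioc (-t_s) t_s :=
    (support_inner_subset.trans inter_subset_right).trans hg_supp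
  rw [energy,
    intervalIntegral.integral_eq_integral_of_support_subset
      (hsupp_f.trans (Ioc_subset_Ioc_right hτ)),
    intervalIntegral.integral_eq_integral_of_support_subset hsupp_f,
    intervalIntegral.integral_eq_integral_of_support_subset hsupp_g,
    intervalIntegral.integral_eq_integral_of_support_subset hsupp_g',
    ← integral_sub_right_eq_self (fun t => ⟪ψf t, g (t + σ)⟫) σ]
  simp only [sub_add_cancel]

/-- With `L` skew-adjoint, `f, g` continuous forcings supported in
`[-t_s, t_s]`, and causal solutions `ψ_f, ψ_g` of the forced evolution equations, for
every `τ ≥ t_s` and `σ ≥ 0`,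
`⟪ψ_f τ, ψ_g (τ + σ)⟫ = ∫_{−t_s}^{t_s} ⟪f t, ψ_g (t + σ)⟫ dt
  + ∫_{−t_s}^{t_s} ⟪ψ_f (t − σ), g t⟫ dt`. -/
theorem inner_waves_data_driven
    {H : Type*} [NormedAddCommGroup H] [InnerProductSpace ℝ H]
    (L : H →L[ℝ] H) (hL : ∀ x y : H, ⟪L x, y⟫ = -⟪x, L y⟫)
    (t_s : ℝ) (hts : 0 < t_s)
    (f g : ℝ → H) (hfc : Continuous f) (hgc : Continuous g)
    (hfsupp : ∀ t : ℝ, t_s ≤ |t| → f t = 0)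
    (hgsupp : ∀ t : ℝ, t_s ≤ |t| → g t = 0)
    (ψf ψg : ℝ → H)
    (hf : ∀ t : ℝ, HasDerivAt ψf (f t - L (ψf t)) t)
    (hg : ∀ t : ℝ, HasDerivAt ψg (g t - L (ψg t)) t)
    (hfcausal : ∀ t : ℝ, t ≤ -t_s → ψf t = 0)
    (hgcausal : ∀ t : ℝ, t ≤ -t_s → ψg t = 0) :
    ∀ τ : ℝ, t_s ≤ τ → ∀ σ : ℝ, 0 ≤ σ →
      ⟪ψf τ, ψg (τ + σ)⟫ =
        (∫ t in (-t_s)..t_s, ⟪f t, ψg (t + σ)⟫) +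
        (∫ t in (-t_s)..t_s, ⟪ψf (t - σ), g t⟫) :=
  inner_waves_data_driven_general L hL t_s f g hfc hgc hfsupp hgsupp ψf ψg hf hg hfcausal
end

section
/- Let H' be any real inner product space and w : Fin n_t → E → H' any orthonormal family (⟪w_j ε, w_l ε'⟫ equals 1 if (j,ε) = (l,ε') and 0 otherwise). Let R : Matrix (Fin n_t × E) (Fin n_t × E) ℝ be any matrix satisfying Rᵀ * R = M, and define the internal wave approximations φ̃_j ε = Σ_{(k,α)} R_{(k,α),(j,ε)} • w_k α for j < n_t and ε ∈ E. Then the approximations fit the data exactly: for every j < n_t and ε, ε' ∈ E, ⟪φ̃_0 ε', φ̃_j ε⟫ = (D_j)_{ε',ε}. -/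
open Matrix
open scoped RealInnerProductSpace

/-- For any real inner product space `H'`, any orthonormal family
`w : Fin n_t → E → H'`, and any matrix `R` with `Rᵀ * R = M`, the internal wave
approximations `φ̃_j ε = Σ_{(k,α)} R_{(k,α),(j,ε)} • w_k α` fit the data exactly:
`⟪φ̃_0 ε', φ̃_j ε⟫ = (D_j)_{ε',ε}` for every `j < n_t`. -/
theorem internal_waves_fit_data
    {H : Type*} [NormedAddCommGroup H] [InnerProductSpace ℝ H]
    {E : Type*} [Fintype E] [Nonempty E] [DecidableEq E]
    (P : H ≃ₗᵢ[ℝ] H) (φ₀ : E → H) (n_t : ℕ) (hn : 1 ≤ n_t)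
    (φ : ℕ → E → H) (hφ : ∀ j ε, φ j ε = (⇑P)^[j] (φ₀ ε))
    (D : ℕ → Matrix E E ℝ) (hD : ∀ j ε' ε, D j ε' ε = ⟪φ₀ ε', φ j ε⟫)
    (M : Matrix (Fin n_t × E) (Fin n_t × E) ℝ)
    (hM : ∀ (j l : Fin n_t) (ε ε' : E),
      M (j, ε) (l, ε') = ⟪φ (j : ℕ) ε, φ (l : ℕ) ε'⟫)
    {H' : Type*} [NormedAddCommGroup H'] [InnerProductSpace ℝ H']
    (w : Fin n_t → E → H')
    (hw : ∀ (j l : Fin n_t) (ε ε' : E),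
      ⟪w j ε, w l ε'⟫ = if (j, ε) = (l, ε') then 1 else 0)
    (R : Matrix (Fin n_t × E) (Fin n_t × E) ℝ) (hR : Rᵀ * R = M)
    (φt : Fin n_t → E → H')
    (hφt : ∀ (j : Fin n_t) (ε : E),
      φt j ε = ∑ p : Fin n_t × E, R p (j, ε) • w p.1 p.2) :
    ∀ (j : Fin n_t) (ε ε' : E),
      ⟪φt ⟨0, hn⟩ ε', φt j ε⟫ = D (j : ℕ) ε' ε := by
  intro j ε ε'
  have key : ⟪φt ⟨0, hn⟩ ε', φt j ε⟫ = (Rᵀ * R) (⟨0, hn⟩, ε') (j, ε) := by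
    rw [hφt, hφt, sum_inner]
    simp_rw [inner_sum, real_inner_smul_left, real_inner_smul_right, hw,
      mul_ite, mul_one, mul_zero, Finset.sum_ite_eq, Finset.mem_univ, if_true]
    simp [Matrix.mul_apply, mul_comm]
  rw [key, hR, hM, hD, hφ, hφ]
  simp
end

section
/- Let H be a real inner product space, X : H →ₗ[ℝ] H a linear map, E a finite type, and y : E → H. For j ∈ ℕ define the block Krylov subspaces K_j = span{X^i (y ε) : i ≤ j, ε ∈ E}. Suppose v : Fin n → E → H satisfies v_j ε ∈ K_j for all j < n and ε ∈ E, and ⟪v_j ε, u⟫ = 0 for every u ∈ K_{j−1} whenever 1 ≤ j < n. Then the compression of X to this family is block upper Hessenberg: ⟪v_j ε, X (v_l ε')⟫ = 0 whenever j ≥ l + 2. -/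
open scoped RealInnerProductSpace

/-- If `v : Fin n → E → H` satisfies `v_j ε ∈ K_j` (the block Krylov
subspaces of `X` generated by the block of vectors `y`) and `v_j ε ⟂ K_{j-1}` for
`1 ≤ j`, then the compression of `X` to this family is block upper Hessenberg:
`⟪v_j ε, X (v_l ε')⟫ = 0` whenever `j ≥ l + 2`. -/
theorem krylov_compression_block_hessenberg
    {H : Type*} [NormedAddCommGroup H] [InnerProductSpace ℝ H]
    (X : H →ₗ[ℝ] H) {E : Type*} [Fintype E] (y : E → H) (n : ℕ)
    (K : ℕ → Submodule ℝ H)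
    (hK : ∀ j : ℕ, K j =
      Submodule.span ℝ {x : H | ∃ i : ℕ, i ≤ j ∧ ∃ ε : E, x = (X ^ i) (y ε)})
    (v : Fin n → E → H)
    (hv1 : ∀ (j : Fin n) (ε : E), v j ε ∈ K (j : ℕ))
    (hv2 : ∀ (j : Fin n), 1 ≤ (j : ℕ) → ∀ (ε : E), ∀ u ∈ K ((j : ℕ) - 1),
      ⟪v j ε, u⟫ = 0) :
    ∀ (j l : Fin n), (l : ℕ) + 2 ≤ (j : ℕ) → ∀ (ε ε' : E),
      ⟪v j ε, X (v l ε')⟫ = 0 := by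
  intro j l hjl ε ε'
  -- K is monotone
  have hmono : ∀ a b : ℕ, a ≤ b → K a ≤ K b := by
    intro a b hab
    rw [hK, hK]
    apply Submodule.span_mono
    rintro x ⟨i, hi, ε0, rfl⟩
    exact ⟨i, hi.trans hab, ε0, rfl⟩
  -- X maps K a into K (a+1)
  have hX : ∀ a : ℕ, ∀ x ∈ K a, X x ∈ K (a + 1) := by
    intro a x hx
    rw [hK] at hx
    induction hx using Submodule.span_induction with
    | mem x hx =>
      obtain ⟨i, hi, ε0, rfl⟩ := hx
      rw [hK]
      apply Submodule.subset_span
      refine ⟨i + 1, by omega, ε0, ?_⟩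
      rw [pow_succ']
      rfl
    | zero => simp only [map_zero]; exact (K (a + 1)).zero_mem
    | add x1 x2 _ _ h1 h2 => simpa using (K (a + 1)).add_mem h1 h2
    | smul c x1 _ h1 => simpa using (K (a + 1)).smul_mem c h1
  have hmem : X (v l ε') ∈ K ((j : ℕ) - 1) :=
    hmono ((l : ℕ) + 1) ((j : ℕ) - 1) (by omega) (hX l _ (hv1 l ε'))
  exact hv2 j (by omega) ε _ hmem
end
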